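/- Let ρ and σ be weak coactions of H^0 on a unital C*-algebra A. Then the following are equivalent: (1) ρ and σ are exterior equivalent, i.e. there is a unitary w ∈ A⊗H^0 with σ = Ad(w)∘ρ and (id⊗ε^0)(w) = 1; (2) ρ and σ are strongly Morita equivalent via a weak coaction λ of H^0 on the A–A equivalence bimodule A itself (with _A⟨a,b⟩ = ab* and ⟨a,b⟩_A = a*b), where λ maps A into the (A⊗H^0)–(A⊗H^0) equivalence bimodule A⊗H^0. -/

import Mathlib

open scoped TensorProduct
open Filter Topology
set_option maxHeartbeats 1000000
set_option linter.unusedSectionVars false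
set_option synthInstance.maxHeartbeats 400000
noncomputable section
namespace SMEPaper
universe u

/-! ### Generalities on tensor products with a finite dimensional C*-algebra -/

/-- Contraction of the right tensor factor against a linear functional:
`appRight f (m ⊗ c) = f c • m`. -/
def appRight {M C : Type*} [AddCommGroup M] [Module ℂ M] [AddCommGroup C] [Module ℂ C]
    (f : C →ₗ[ℂ] ℂ) : M ⊗[ℂ] C →ₗ[ℂ] M :=
  (TensorProduct.rid ℂ M).toLinearMap ∘ₗ TensorProduct.map LinearMap.id f

/-- The `i`-th coordinate, with respect to the canonical finite basis of `C`, of an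
element of `M ⊗[ℂ] C`. -/
def tcoord {M C : Type*} [AddCommGroup M] [Module ℂ M] [AddCommGroup C] [Module ℂ C]
    [FiniteDimensional ℂ C] (i : Fin (Module.finrank ℂ C)) : M ⊗[ℂ] C →ₗ[ℂ] M :=
  appRight ((Module.finBasis ℂ C).coord i)

/-- The star operation on `M ⊗[ℂ] C` (`C` finite dimensional) where the star operation on the
first factor is supplied as a function: on simple tensors, `m ⊗ c ↦ sM m ⊗ star c`. -/
def tstarWith {M C : Type*} [AddCommGroup M] [Module ℂ M] [Ring C] [Algebra ℂ C]
    [StarRing C] [FiniteDimensional ℂ C] (sM : M → M) (t : M ⊗[ℂ] C) : M ⊗[ℂ] C :=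
  ∑ i, sM (tcoord i t) ⊗ₜ star (Module.finBasis ℂ C i)

/-- Combination of an operation on the first factors and an operation on the second (finite
dimensional) factors to an operation on tensor products: on simple tensors,
`tmix op cop (p ⊗ c) (q ⊗ d) = op p q ⊗ cop c d`. -/
def tmix {P Q R C : Type*} [AddCommGroup P] [Module ℂ P] [AddCommGroup Q] [Module ℂ Q]
    [AddCommGroup R] [Module ℂ R] [Ring C] [Algebra ℂ C] [FiniteDimensional ℂ C]
    (op : P → Q → R) (cop : C → C → C) (s : P ⊗[ℂ] C) (t : Q ⊗[ℂ] C) : R ⊗[ℂ] C :=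
  ∑ i, ∑ j,
    op (tcoord i s) (tcoord j t) ⊗ₜ cop (Module.finBasis ℂ C i) (Module.finBasis ℂ C j)

/-- The operation on tensor products induced by an operation on the first factors (and
multiplication in the second): `tact op (p ⊗ c) (q ⊗ d) = op p q ⊗ (c * d)`. -/
def tact {P Q R C : Type*} [AddCommGroup P] [Module ℂ P] [AddCommGroup Q] [Module ℂ Q]
    [AddCommGroup R] [Module ℂ R] [Ring C] [Algebra ℂ C] [FiniteDimensional ℂ C]
    (op : P → Q → R) : P ⊗[ℂ] C → Q ⊗[ℂ] C → R ⊗[ℂ] C :=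
  tmix op (· * ·)

/-- The left inner product on `X ⊗ C` induced by a left (`A`-valued) inner product on `X`:
`(x ⊗ c), (y ⊗ d) ↦ inn x y ⊗ (c * star d)`. -/
def tinnL {X A C : Type*} [AddCommGroup X] [Module ℂ X] [AddCommGroup A] [Module ℂ A]
    [Ring C] [Algebra ℂ C] [StarRing C] [FiniteDimensional ℂ C]
    (inn : X → X → A) : X ⊗[ℂ] C → X ⊗[ℂ] C → A ⊗[ℂ] C :=
  tmix inn (fun c d => c * star d)

/-- The right inner product on `X ⊗ C` induced by a right (`B`-valued) inner product on `X`: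
`(x ⊗ c), (y ⊗ d) ↦ inn x y ⊗ (star c * d)`. -/
def tinnR {X B C : Type*} [AddCommGroup X] [Module ℂ X] [AddCommGroup B] [Module ℂ B]
    [Ring C] [Algebra ℂ C] [StarRing C] [FiniteDimensional ℂ C]
    (inn : X → X → B) : X ⊗[ℂ] C → X ⊗[ℂ] C → B ⊗[ℂ] C :=
  tmix inn (fun c d => star c * d)

/-! ### Finite dimensional C*-Hopf algebras -/

/-- The data and axioms of a finite dimensional C*-Hopf algebra structure on the finite
dimensional C*-algebra `H0`: a comultiplication, counit and antipode satisfying the Hopf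
algebra axioms, compatibly with the ⋆-structure. -/
structure HopfAlgData (H0 : Type u) [Ring H0] [Algebra ℂ H0] [StarRing H0]
    [StarModule ℂ H0] [FiniteDimensional ℂ H0] where
  comul : H0 →ₐ[ℂ] H0 ⊗[ℂ] H0
  counit : H0 →ₐ[ℂ] ℂ
  antipode : H0 →ₗ[ℂ] H0
  coassoc : ∀ h, TensorProduct.map comul.toLinearMap LinearMap.id (comul h)
      = (TensorProduct.assoc ℂ H0 H0 H0).symm
          (TensorProduct.map LinearMap.id comul.toLinearMap (comul h))
  counit_left : ∀ h,
      (TensorProduct.lid ℂ H0) (TensorProduct.map counit.toLinearMap LinearMap.id (comul h)) = h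
  counit_right : ∀ h, appRight counit.toLinearMap (comul h) = h
  antipode_left : ∀ (h : H0) (n : ℕ) (h1 h2 : Fin n → H0),
      comul h = ∑ i, h1 i ⊗ₜ h2 i → ∑ i, antipode (h1 i) * h2 i = counit h • 1
  antipode_right : ∀ (h : H0) (n : ℕ) (h1 h2 : Fin n → H0),
      comul h = ∑ i, h1 i ⊗ₜ h2 i → ∑ i, h1 i * antipode (h2 i) = counit h • 1
  comul_star : ∀ h, comul (star h) = tstarWith star (comul h)
  counit_star : ∀ h, counit (star h) = starRingEnd ℂ (counit h)

/-! ### Coactions on C*-algebras -/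

section Coaction
variable {H0 : Type u} [Ring H0] [Algebra ℂ H0] [StarRing H0] [StarModule ℂ H0]
  [FiniteDimensional ℂ H0]
variable {A B X : Type u} [Ring A] [Algebra ℂ A] [StarRing A]
  [Ring B] [Algebra ℂ B] [StarRing B] [AddCommGroup X] [Module ℂ X]

/-- `ρ : A → A ⊗ H0` is a weak coaction of `H0` (with counit `ε0`) on `A`:
a unital ⋆-homomorphism with `(id ⊗ ε0) ∘ ρ = id`. -/
structure IsWeakCoaction (ε0 : H0 →ₗ[ℂ] ℂ) (ρ : A →ₗ[ℂ] A ⊗[ℂ] H0) : Prop where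
  map_one : ρ 1 = 1
  map_mul : ∀ a b, ρ (a * b) = ρ a * ρ b
  map_star : ∀ a, ρ (star a) = tstarWith star (ρ a)
  counital : ∀ a, appRight ε0 (ρ a) = a

/-- `ρ : A → A ⊗ H0` is a coaction of `H0` (with comultiplication `Δ0`, counit `ε0`) on `A`:
a weak coaction with `(ρ ⊗ id) ∘ ρ = (id ⊗ Δ0) ∘ ρ`. -/
structure IsCoaction (Δ0 : H0 →ₗ[ℂ] H0 ⊗[ℂ] H0) (ε0 : H0 →ₗ[ℂ] ℂ)
    (ρ : A →ₗ[ℂ] A ⊗[ℂ] H0) extends IsWeakCoaction ε0 ρ : Prop where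
  coassoc : ∀ a, TensorProduct.map ρ LinearMap.id (ρ a)
      = (TensorProduct.assoc ℂ A H0 H0).symm (TensorProduct.map LinearMap.id Δ0 (ρ a))

/-- The pair `(ρ, u)` is a twisted coaction of `H0` on `A`. -/
structure IsTwistedCoaction (Δ0 : H0 →ₗ[ℂ] H0 ⊗[ℂ] H0) (ε0 : H0 →ₗ[ℂ] ℂ)
    (ρ : A →ₗ[ℂ] A ⊗[ℂ] H0) (u : (A ⊗[ℂ] H0) ⊗[ℂ] H0)
    extends IsWeakCoaction ε0 ρ : Prop where
  unitary_left : u * tstarWith (tstarWith star) u = 1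
  unitary_right : tstarWith (tstarWith star) u * u = 1
  twisted_coassoc : ∀ a, TensorProduct.map ρ LinearMap.id (ρ a)
      = u * ((TensorProduct.assoc ℂ A H0 H0).symm (TensorProduct.map LinearMap.id Δ0 (ρ a)))
        * tstarWith (tstarWith star) u
  cocycle : (u ⊗ₜ (1 : H0))
        * TensorProduct.map ((TensorProduct.assoc ℂ A H0 H0).symm.toLinearMap
            ∘ₗ TensorProduct.map LinearMap.id Δ0) LinearMap.id u
      = TensorProduct.map (TensorProduct.map ρ LinearMap.id) LinearMap.id u
        * (TensorProduct.assoc ℂ (A ⊗[ℂ] H0) H0 H0).symm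
            (TensorProduct.map LinearMap.id Δ0 u)
  counit_mid : ∀ h : Module.Dual ℂ H0, appRight h (appRight ε0 u) = h 1 • (1 : A)
  counit_out : ∀ h : Module.Dual ℂ H0, appRight ε0 (appRight h u) = h 1 • (1 : A)

/-- The trivial coaction `a ↦ a ⊗ 1` of `H0` on `A`. -/
def trivialCoaction (H0 : Type u) [Ring H0] [Algebra ℂ H0] (A : Type u) [Ring A]
    [Algebra ℂ A] : A →ₗ[ℂ] A ⊗[ℂ] H0 :=
  (TensorProduct.mk ℂ A H0).flip 1

end Coaction

/-! ### Hilbert bimodules -/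

/-- A (pre-)Hilbert `A`–`B` bimodule structure on `X`: a bimodule with a left `A`-valued and a
right `B`-valued inner product, compatible with the module actions, with the appropriate
(conjugate-)linearity, symmetry, positivity and definiteness properties. -/
structure Bimod (A B X : Type u) [Ring A] [Algebra ℂ A] [StarRing A]
    [Ring B] [Algebra ℂ B] [StarRing B] [AddCommGroup X] [Module ℂ X] where
  ls : A → X → X
  rs : X → B → X
  linn : X → X → A
  rinn : X → X → B
  ls_one : ∀ x, ls 1 x = x
  ls_mul : ∀ a a' x, ls (a * a') x = ls a (ls a' x)
  ls_add : ∀ a a' x, ls (a + a') x = ls a x + ls a' x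
  ls_add' : ∀ a x y, ls a (x + y) = ls a x + ls a y
  ls_smul : ∀ (c : ℂ) a x, ls (c • a) x = c • ls a x
  ls_smul' : ∀ (c : ℂ) a x, ls a (c • x) = c • ls a x
  rs_one : ∀ x, rs x 1 = x
  rs_mul : ∀ x b b', rs x (b * b') = rs (rs x b) b'
  rs_add : ∀ x b b', rs x (b + b') = rs x b + rs x b'
  rs_add' : ∀ x y b, rs (x + y) b = rs x b + rs y b
  rs_smul : ∀ (c : ℂ) x b, rs x (c • b) = c • rs x b
  rs_smul' : ∀ (c : ℂ) x b, rs (c • x) b = c • rs x b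
  ls_rs : ∀ a x b, ls a (rs x b) = rs (ls a x) b
  linn_add_left : ∀ x y z, linn (x + y) z = linn x z + linn y z
  linn_add_right : ∀ x y z, linn x (y + z) = linn x y + linn x z
  rinn_add_left : ∀ x y z, rinn (x + y) z = rinn x z + rinn y z
  rinn_add_right : ∀ x y z, rinn x (y + z) = rinn x y + rinn x z
  linn_smul_left : ∀ (c : ℂ) x y, linn (c • x) y = c • linn x y
  linn_smul_right : ∀ (c : ℂ) x y, linn x (c • y) = starRingEnd ℂ c • linn x y
  rinn_smul_left : ∀ (c : ℂ) x y, rinn (c • x) y = starRingEnd ℂ c • rinn x y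
  rinn_smul_right : ∀ (c : ℂ) x y, rinn x (c • y) = c • rinn x y
  linn_star : ∀ x y, star (linn x y) = linn y x
  rinn_star : ∀ x y, star (rinn x y) = rinn y x
  linn_ls : ∀ a x y, linn (ls a x) y = a * linn x y
  rinn_rs : ∀ x y b, rinn x (rs y b) = rinn x y * b
  linn_rs : ∀ x y b, linn (rs x b) y = linn x (rs y (star b))
  rinn_ls : ∀ a x y, rinn (ls a x) y = rinn x (ls (star a) y)
  linn_pos : ∀ x, ∃ a, linn x x = star a * a
  rinn_pos : ∀ x, ∃ b, rinn x x = star b * b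
  rinn_def : ∀ x, rinn x x = 0 → x = 0

section BimodDefs
variable {A B X : Type u} [Ring A] [Algebra ℂ A] [StarRing A]
    [Ring B] [Algebra ℂ B] [StarRing B] [AddCommGroup X] [Module ℂ X]

/-- A Hilbert bimodule is of finite type if it admits a finite right basis and a finite left
basis in the sense of Kajiwara–Watatani. -/
def Bimod.FiniteType (bm : Bimod A B X) : Prop :=
  (∃ (n : ℕ) (u : Fin n → X), ∀ x, ∑ i, bm.rs (u i) (bm.rinn (u i) x) = x) ∧
  (∃ (m : ℕ) (v : Fin m → X), ∀ x, ∑ j, bm.ls (bm.linn x (v j)) (v j) = x)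

/-- An equivalence bimodule: both inner products are full and the associativity condition
`_A⟨x,y⟩ • z = x • ⟨y,z⟩_B` holds. -/
def Bimod.IsEquivalence (bm : Bimod A B X) : Prop :=
  (∀ x y z, bm.ls (bm.linn x y) z = bm.rs x (bm.rinn y z)) ∧
  Submodule.span ℂ (Set.range fun p : X × X => bm.linn p.1 p.2) = ⊤ ∧
  Submodule.span ℂ (Set.range fun p : X × X => bm.rinn p.1 p.2) = ⊤

end BimodDefs

/-! ### Coactions on Hilbert bimodules, covariant systems, strong Morita equivalence -/

section BimodCoaction
variable {H0 : Type u} [Ring H0] [Algebra ℂ H0] [StarRing H0] [StarModule ℂ H0]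
  [FiniteDimensional ℂ H0]
variable {A B X : Type u} [Ring A] [Algebra ℂ A] [StarRing A]
  [Ring B] [Algebra ℂ B] [StarRing B] [AddCommGroup X] [Module ℂ X]

/-- `(A, B, X, ρ, σ, λ, H0)` is a weak covariant system: `lam` is a weak coaction of `H0` on
the Hilbert `A`–`B` bimodule `X` with respect to `(A, B, ρ, σ)`. -/
structure IsWeakCoactionBimod (ε0 : H0 →ₗ[ℂ] ℂ) (bm : Bimod A B X)
    (ρ : A →ₗ[ℂ] A ⊗[ℂ] H0) (σ : B →ₗ[ℂ] B ⊗[ℂ] H0)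
    (lam : X →ₗ[ℂ] X ⊗[ℂ] H0) : Prop where
  ls_compat : ∀ a x, lam (bm.ls a x) = tact bm.ls (ρ a) (lam x)
  rs_compat : ∀ x b, lam (bm.rs x b) = tact bm.rs (lam x) (σ b)
  linn_compat : ∀ x y, ρ (bm.linn x y) = tinnL bm.linn (lam x) (lam y)
  rinn_compat : ∀ x y, σ (bm.rinn x y) = tinnR bm.rinn (lam x) (lam y)
  counital : ∀ x, appRight ε0 (lam x) = x

/-- `(A, B, X, ρ, σ, λ, H0)` is a covariant system: `lam` is a coaction of `H0` on the
Hilbert `A`–`B` bimodule `X` with respect to `(A, B, ρ, σ)`. -/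
structure IsCoactionBimod (Δ0 : H0 →ₗ[ℂ] H0 ⊗[ℂ] H0) (ε0 : H0 →ₗ[ℂ] ℂ) (bm : Bimod A B X)
    (ρ : A →ₗ[ℂ] A ⊗[ℂ] H0) (σ : B →ₗ[ℂ] B ⊗[ℂ] H0) (lam : X →ₗ[ℂ] X ⊗[ℂ] H0)
    extends IsWeakCoactionBimod ε0 bm ρ σ lam : Prop where
  coassoc : ∀ x, TensorProduct.map lam LinearMap.id (lam x)
      = (TensorProduct.assoc ℂ X H0 H0).symm (TensorProduct.map LinearMap.id Δ0 (lam x))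

/-- `(A, B, X, ρ, u, σ, v, λ, H0)` is a twisted covariant system: `lam` is a twisted coaction
of `H0` on the Hilbert `A`–`B` bimodule `X` with respect to `(A, B, ρ, u, σ, v)`. -/
structure IsTwistedCoactionBimod (Δ0 : H0 →ₗ[ℂ] H0 ⊗[ℂ] H0) (ε0 : H0 →ₗ[ℂ] ℂ)
    (bm : Bimod A B X) (ρ : A →ₗ[ℂ] A ⊗[ℂ] H0) (u : (A ⊗[ℂ] H0) ⊗[ℂ] H0)
    (σ : B →ₗ[ℂ] B ⊗[ℂ] H0) (v : (B ⊗[ℂ] H0) ⊗[ℂ] H0) (lam : X →ₗ[ℂ] X ⊗[ℂ] H0)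
    extends IsWeakCoactionBimod ε0 bm ρ σ lam : Prop where
  twisted : ∀ x, TensorProduct.map lam LinearMap.id (lam x)
      = tact (tact bm.rs)
          (tact (tact bm.ls) u
            ((TensorProduct.assoc ℂ X H0 H0).symm (TensorProduct.map LinearMap.id Δ0 (lam x))))
          (tstarWith (tstarWith star) v)

/-- Two weak coactions `ρ` (on `A`) and `σ` (on `B`) of `H0` are strongly Morita equivalent
if there are an `A`–`B` equivalence bimodule `X` and a weak coaction of `H0` on `X` with
respect to `(A, B, ρ, σ)`. -/
def WeakSME (ε0 : H0 →ₗ[ℂ] ℂ) (ρ : A →ₗ[ℂ] A ⊗[ℂ] H0) (σ : B →ₗ[ℂ] B ⊗[ℂ] H0) : Prop :=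
  ∃ (X : Type u) (_ : AddCommGroup X) (_ : Module ℂ X) (bm : Bimod A B X),
    bm.IsEquivalence ∧ ∃ lam : X →ₗ[ℂ] X ⊗[ℂ] H0, IsWeakCoactionBimod ε0 bm ρ σ lam

/-- Two coactions `ρ` (on `A`) and `σ` (on `B`) of `H0` are strongly Morita equivalent if
there are an `A`–`B` equivalence bimodule `X` and a coaction of `H0` on `X` with respect to
`(A, B, ρ, σ)`. -/
def CoactSME (Δ0 : H0 →ₗ[ℂ] H0 ⊗[ℂ] H0) (ε0 : H0 →ₗ[ℂ] ℂ)
    (ρ : A →ₗ[ℂ] A ⊗[ℂ] H0) (σ : B →ₗ[ℂ] B ⊗[ℂ] H0) : Prop :=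
  ∃ (X : Type u) (_ : AddCommGroup X) (_ : Module ℂ X) (bm : Bimod A B X),
    bm.IsEquivalence ∧ ∃ lam : X →ₗ[ℂ] X ⊗[ℂ] H0, IsCoactionBimod Δ0 ε0 bm ρ σ lam

/-- Two twisted coactions `(ρ, u)` (on `A`) and `(σ, v)` (on `B`) of `H0` are strongly Morita
equivalent if there are an `A`–`B` equivalence bimodule `X` and a twisted coaction of `H0` on
`X` with respect to `(A, B, ρ, u, σ, v)`. -/
def TwistedSME (Δ0 : H0 →ₗ[ℂ] H0 ⊗[ℂ] H0) (ε0 : H0 →ₗ[ℂ] ℂ)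
    (ρ : A →ₗ[ℂ] A ⊗[ℂ] H0) (u : (A ⊗[ℂ] H0) ⊗[ℂ] H0)
    (σ : B →ₗ[ℂ] B ⊗[ℂ] H0) (v : (B ⊗[ℂ] H0) ⊗[ℂ] H0) : Prop :=
  ∃ (X : Type u) (_ : AddCommGroup X) (_ : Module ℂ X) (bm : Bimod A B X),
    bm.IsEquivalence ∧
      ∃ lam : X →ₗ[ℂ] X ⊗[ℂ] H0, IsTwistedCoactionBimod Δ0 ε0 bm ρ u σ v lam

end BimodCoaction
/-! ### The identity equivalence bimodule of a unital C*-algebra -/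

/-- The canonical `A`–`A` equivalence bimodule structure on `A` itself, with
`_A⟨a,b⟩ = a b*` and `⟨a,b⟩_A = a* b`. -/
def idBimod (A : Type u) [CStarAlgebra A] [StarModule ℂ A] : Bimod A A A where
  ls a x := a * x
  rs x b := x * b
  linn x y := x * star y
  rinn x y := star x * y
  ls_one := one_mul
  ls_mul a a' x := mul_assoc a a' x
  ls_add a a' x := add_mul a a' x
  ls_add' a x y := mul_add a x y
  ls_smul c a x := smul_mul_assoc c a x
  ls_smul' c a x := mul_smul_comm c a x
  rs_one := mul_one
  rs_mul x b b' := (mul_assoc x b b').symm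
  rs_add x b b' := mul_add x b b'
  rs_add' x y b := add_mul x y b
  rs_smul c x b := mul_smul_comm c x b
  rs_smul' c x b := smul_mul_assoc c x b
  ls_rs a x b := (mul_assoc a x b).symm
  linn_add_left x y z := add_mul x y (star z)
  linn_add_right x y z := by simp [star_add, mul_add]
  rinn_add_left x y z := by simp [star_add, add_mul]
  rinn_add_right x y z := mul_add (star x) y z
  linn_smul_left c x y := smul_mul_assoc c x (star y)
  linn_smul_right c x y := by
    show x * star (c • y) = starRingEnd ℂ c • (x * star y)
    rw [star_smul, mul_smul_comm, starRingEnd_apply]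
  rinn_smul_left c x y := by
    show star (c • x) * y = starRingEnd ℂ c • (star x * y)
    rw [star_smul, smul_mul_assoc, starRingEnd_apply]
  rinn_smul_right c x y := mul_smul_comm c (star x) y
  linn_star x y := by simp [star_mul, star_star]
  rinn_star x y := by simp [star_mul, star_star]
  linn_ls a x y := mul_assoc a x (star y)
  rinn_rs x y b := (mul_assoc (star x) y b).symm
  linn_rs x y b := by simp [star_mul, star_star, mul_assoc]
  rinn_ls a x y := by simp [star_mul, star_star, mul_assoc]
  linn_pos x := ⟨star x, by rw [star_star]⟩
  rinn_pos x := ⟨x, rfl⟩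
  rinn_def x h := by
    have h' : star x * x = 0 := h
    have h1 : ‖x‖ * ‖x‖ = 0 := by
      rw [← CStarRing.norm_star_mul_self (x := x), h', norm_zero]
    exact norm_eq_zero.mp (mul_self_eq_zero.mp h1)

section ExtEquiv
variable {H0 : Type u} [Ring H0] [Algebra ℂ H0] [StarRing H0] [StarModule ℂ H0]
  [FiniteDimensional ℂ H0]
variable {A : Type u} [Ring A] [Algebra ℂ A] [StarRing A]

/-- Two weak coactions `ρ, σ` of `H0` on `A` are exterior equivalent: there is a unitary
`w ∈ A ⊗ H0` with `σ = Ad(w) ∘ ρ` and `(id ⊗ ε0)(w) = 1`. -/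
def ExtEquiv (ε0 : H0 →ₗ[ℂ] ℂ) (ρ σ : A →ₗ[ℂ] A ⊗[ℂ] H0) : Prop :=
  ∃ w : A ⊗[ℂ] H0, w * tstarWith star w = 1 ∧ tstarWith star w * w = 1 ∧
    (∀ a, σ a = w * ρ a * tstarWith star w) ∧ appRight ε0 w = 1

/-- The twisted coactions `(ρ, u)` and `(σ, v)` of `H0` on `A` are exterior equivalent:
there is a unitary `w ∈ A ⊗ H0` with `σ = Ad(w) ∘ ρ` and
`v = (w ⊗ 1)(ρ ⊗ id)(w) u (id ⊗ Δ0)(w*)`. -/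
def ExtEquivTwisted (Δ0 : H0 →ₗ[ℂ] H0 ⊗[ℂ] H0)
    (ρ : A →ₗ[ℂ] A ⊗[ℂ] H0) (u : (A ⊗[ℂ] H0) ⊗[ℂ] H0)
    (σ : A →ₗ[ℂ] A ⊗[ℂ] H0) (v : (A ⊗[ℂ] H0) ⊗[ℂ] H0) : Prop :=
  ∃ w : A ⊗[ℂ] H0, w * tstarWith star w = 1 ∧ tstarWith star w * w = 1 ∧
    (∀ a, σ a = w * ρ a * tstarWith star w) ∧
    v = (w ⊗ₜ (1 : H0)) * TensorProduct.map ρ LinearMap.id w * u *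
        (TensorProduct.assoc ℂ A H0 H0).symm
          (TensorProduct.map LinearMap.id Δ0 (tstarWith star w))

end ExtEquiv

/-!
On the bimodule `A` itself, compatibility of `λ` with the two actions forces
`λ(a) = ρ(a) λ(1) = λ(1) σ(a)`, and the two inner product conditions at `(1, 1)` say that
`λ(1)` is unitary. Hence `w = λ(1)*` is a unitary with `σ = Ad(w) ∘ ρ`, and `(id ⊗ ε0)(w) = 1`
by counitality of `λ`. Conversely, `λ(a) = ρ(a) w*` is a weak coaction on `A` whenever
`σ = Ad(w) ∘ ρ`.
-/

section TensorCoordinates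

variable {M C : Type*} [AddCommGroup M] [Module ℂ M]

lemma appRight_tmul [AddCommGroup C] [Module ℂ C] (f : C →ₗ[ℂ] ℂ) (m : M) (c : C) :
    appRight f (m ⊗ₜ[ℂ] c) = f c • m := by
  simp [appRight]

lemma sum_tcoord_tmul_finBasis [AddCommGroup C] [Module ℂ C] [FiniteDimensional ℂ C]
    (t : M ⊗[ℂ] C) : ∑ i, tcoord i t ⊗ₜ[ℂ] Module.finBasis ℂ C i = t := by
  induction t using TensorProduct.induction_on with
  | zero => simp
  | tmul m c =>
    simp_rw [tcoord, appRight_tmul, TensorProduct.smul_tmul, ← TensorProduct.tmul_sum,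
      Module.Basis.coord_apply, Module.Basis.sum_repr]
  | add s t hs ht => simp only [map_add, TensorProduct.add_tmul, Finset.sum_add_distrib, hs, ht]

lemma tstarWith_star [StarAddMonoid M] [StarModule ℂ M] [Ring C] [Algebra ℂ C] [StarRing C]
    [StarModule ℂ C] [FiniteDimensional ℂ C] (t : M ⊗[ℂ] C) :
    tstarWith (star : M → M) t = star t := by
  conv_rhs => rw [← sum_tcoord_tmul_finBasis t]
  simp [tstarWith, star_sum]

lemma appRight_star [StarAddMonoid M] [StarModule ℂ M] [AddCommGroup C] [StarAddMonoid C]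
    [Module ℂ C] [StarModule ℂ C] (f : C →ₗ[ℂ] ℂ)
    (hf : ∀ c, f (star c) = starRingEnd ℂ (f c)) (t : M ⊗[ℂ] C) :
    appRight f (star t) = star (appRight f t) := by
  induction t using TensorProduct.induction_on with
  | zero => simp
  | tmul m c => simp [appRight_tmul, hf, star_smul]
  | add s t hs ht => simp only [star_add, map_add, hs, ht]

variable {A : Type*} [Ring A] [Algebra ℂ A]

lemma appRight_mul [Ring C] [Algebra ℂ C] (f : C →ₐ[ℂ] ℂ) (s t : A ⊗[ℂ] C) :
    appRight f.toLinearMap (s * t) = appRight f.toLinearMap s * appRight f.toLinearMap t := by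
  have hf : appRight f.toLinearMap = ((Algebra.TensorProduct.rid ℂ ℂ A).toAlgHom.comp
      (Algebra.TensorProduct.map (AlgHom.id ℂ A) f)).toLinearMap :=
    TensorProduct.ext' fun a c => by simp [appRight_tmul]
  simp only [hf, AlgHom.toLinearMap_apply, map_mul]

variable [Ring C] [Algebra ℂ C] [FiniteDimensional ℂ C]

lemma tmix_mul_mul (f g : A → A) (φ ψ : C → C) (s t : A ⊗[ℂ] C) :
    tmix (fun x y => f x * g y) (fun c d => φ c * ψ d) s t
      = (∑ i, f (tcoord i s) ⊗ₜ[ℂ] φ (Module.finBasis ℂ C i))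
          * ∑ j, g (tcoord j t) ⊗ₜ[ℂ] ψ (Module.finBasis ℂ C j) := by
  simp only [tmix, Finset.sum_mul_sum, Algebra.TensorProduct.tmul_mul_tmul]

lemma tact_mul (s t : A ⊗[ℂ] C) : tact (· * ·) s t = s * t :=
  (tmix_mul_mul id id id id s t).trans (by simp only [id, sum_tcoord_tmul_finBasis])

variable [StarRing A] [StarModule ℂ A] [StarRing C] [StarModule ℂ C]

lemma tinnL_mul_star (s t : A ⊗[ℂ] C) : tinnL (fun x y => x * star y) s t = s * star t :=
  (tmix_mul_mul id star id star s t).trans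
    (by rw [← tstarWith_star t]; simp only [id, sum_tcoord_tmul_finBasis, tstarWith])

lemma tinnR_star_mul (s t : A ⊗[ℂ] C) : tinnR (fun x y => star x * y) s t = star s * t :=
  (tmix_mul_mul star id star id s t).trans
    (by rw [← tstarWith_star s]; simp only [id, sum_tcoord_tmul_finBasis, tstarWith])

end TensorCoordinates

section IdBimod

variable {H0 A : Type u} [Ring H0] [Algebra ℂ H0] [StarRing H0] [StarModule ℂ H0]
  [FiniteDimensional ℂ H0] [CStarAlgebra A] [StarModule ℂ A]

lemma isWeakCoactionBimod_idBimod_iff {ε : H0 →ₗ[ℂ] ℂ} {ρ σ lam : A →ₗ[ℂ] A ⊗[ℂ] H0} :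
    IsWeakCoactionBimod ε (idBimod A) ρ σ lam ↔
      (∀ a x, lam (a * x) = ρ a * lam x) ∧ (∀ x b, lam (x * b) = lam x * σ b) ∧
      (∀ x y, ρ (x * star y) = lam x * star (lam y)) ∧
      (∀ x y, σ (star x * y) = star (lam x) * lam y) ∧ ∀ x, appRight ε (lam x) = x := by
  constructor
  · rintro ⟨hls, hrs, hlinn, hrinn, hε⟩
    exact ⟨fun a x => (hls a x).trans (tact_mul _ _), fun x b => (hrs x b).trans (tact_mul _ _),
      fun x y => (hlinn x y).trans (tinnL_mul_star _ _),
      fun x y => (hrinn x y).trans (tinnR_star_mul _ _), hε⟩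
  · rintro ⟨hls, hrs, hlinn, hrinn, hε⟩
    exact ⟨fun a x => (hls a x).trans (tact_mul _ _).symm,
      fun x b => (hrs x b).trans (tact_mul _ _).symm,
      fun x y => (hlinn x y).trans (tinnL_mul_star _ _).symm,
      fun x y => (hrinn x y).trans (tinnR_star_mul _ _).symm, hε⟩

lemma extEquiv_iff {ε : H0 →ₗ[ℂ] ℂ} {ρ σ : A →ₗ[ℂ] A ⊗[ℂ] H0} :
    ExtEquiv ε ρ σ ↔ ∃ w ∈ unitary (A ⊗[ℂ] H0),
      (∀ a, σ a = w * ρ a * star w) ∧ appRight ε w = 1 := by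
  simp only [ExtEquiv, tstarWith_star, Unitary.mem_iff]
  exact exists_congr fun w => by tauto

variable {ε : H0 →ₐ[ℂ] ℂ} {ρ σ : A →ₗ[ℂ] A ⊗[ℂ] H0}

lemma isWeakCoactionBimod_idBimod_mulRight_star
    (hε : ∀ h, ε (star h) = starRingEnd ℂ (ε h)) (hρ : IsWeakCoaction ε.toLinearMap ρ)
    {w : A ⊗[ℂ] H0} (hw : w ∈ unitary (A ⊗[ℂ] H0)) (hσ : ∀ a, σ a = w * ρ a * star w)
    (hεw : appRight ε.toLinearMap w = 1) :
    IsWeakCoactionBimod ε.toLinearMap (idBimod A) ρ σ (LinearMap.mulRight ℂ (star w) ∘ₗ ρ) := by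
  have hρ_star : ∀ a, ρ (star a) = star (ρ a) := fun a => (hρ.map_star a).trans (tstarWith_star _)
  have hww : star w * w = 1 := Unitary.star_mul_self_of_mem hw
  refine isWeakCoactionBimod_idBimod_iff.mpr ⟨fun a x => ?_, fun x b => ?_, fun x y => ?_,
    fun x y => ?_, fun x => ?_⟩ <;>
    simp only [LinearMap.comp_apply, LinearMap.mulRight_apply, hρ.map_mul, hρ_star, star_mul,
      star_star, hσ]
  · exact mul_assoc _ _ _
  · calc ρ x * ρ b * star w = ρ x * (star w * w) * ρ b * star w := by rw [hww, mul_one]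
      _ = ρ x * star w * (w * ρ b * star w) := by noncomm_ring
  · calc ρ x * star (ρ y) = ρ x * (star w * w) * star (ρ y) := by rw [hww, mul_one]
      _ = ρ x * star w * (w * star (ρ y)) := by noncomm_ring
  · noncomm_ring
  · rw [appRight_mul, hρ.counital, appRight_star _ hε, hεw, star_one, mul_one]

lemma extEquiv_of_isWeakCoactionBimod_idBimod (hε : ∀ h, ε (star h) = starRingEnd ℂ (ε h))
    (hρ : ρ 1 = 1) (hσ : σ 1 = 1) {lam : A →ₗ[ℂ] A ⊗[ℂ] H0}
    (hlam : IsWeakCoactionBimod ε.toLinearMap (idBimod A) ρ σ lam) :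
    ExtEquiv ε.toLinearMap ρ σ := by
  obtain ⟨hls, hrs, hlinn, hrinn, hεlam⟩ := isWeakCoactionBimod_idBimod_iff.mp hlam
  have hρlam : ∀ a, lam a = ρ a * lam 1 := fun a => by simpa using hls a 1
  have hlamσ : ∀ a, lam a = lam 1 * σ a := fun a => by simpa using hrs 1 a
  have hunit : lam 1 ∈ unitary (A ⊗[ℂ] H0) :=
    Unitary.mem_iff.mpr ⟨by simpa [hσ] using (hrinn 1 1).symm,
      by simpa [hρ] using (hlinn 1 1).symm⟩
  refine extEquiv_iff.mpr ⟨star (lam 1), Unitary.star_mem hunit, fun a => ?_, ?_⟩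
  · rw [star_star, mul_assoc, ← hρlam, hlamσ a, ← mul_assoc,
      Unitary.star_mul_self_of_mem hunit, one_mul]
  · rw [appRight_star _ hε, hεlam, star_one]

end IdBimod

/-- Let `ρ` and `σ` be weak coactions of `H0` on a unital C*-algebra `A`.
The following are equivalent: (1) `ρ` and `σ` are exterior equivalent; (2) `ρ` and `σ` are
strongly Morita equivalent via a weak coaction `λ` of `H0` on the `A`–`A` equivalence
bimodule `A` itself (with `_A⟨a,b⟩ = ab*`, `⟨a,b⟩_A = a*b`), `λ` mapping `A` into the
`(A ⊗ H0)`–`(A ⊗ H0)` equivalence bimodule `A ⊗ H0`. -/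
theorem extEquiv_iff_strongMorita_idBimod
    {H0 : Type u} [CStarAlgebra H0] [StarModule ℂ H0] [FiniteDimensional ℂ H0]
    {A : Type u} [CStarAlgebra A] [StarModule ℂ A]
    (hd : HopfAlgData H0) (ρ σ : A →ₗ[ℂ] A ⊗[ℂ] H0)
    (hρ : IsWeakCoaction hd.counit.toLinearMap ρ)
    (hσ : IsWeakCoaction hd.counit.toLinearMap σ) :
    ExtEquiv hd.counit.toLinearMap ρ σ ↔
      ∃ lam : A →ₗ[ℂ] A ⊗[ℂ] H0,
        IsWeakCoactionBimod hd.counit.toLinearMap (idBimod A) ρ σ lam := by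
  constructor
  · rw [extEquiv_iff]
    rintro ⟨w, hw, hσw, hεw⟩
    exact ⟨_, isWeakCoactionBimod_idBimod_mulRight_star hd.counit_star hρ hw hσw hεw⟩
  · rintro ⟨lam, hlam⟩
    exact extEquiv_of_isWeakCoactionBimod_idBimod hd.counit_star hρ.map_one hσ.map_one hlam

end SMEPaper
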